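/- The free group of rank 2 is not weakly homogeneous: in F₂ := FreeGroup (Fin 2) with free generators x₀, x₁, set a := x₀² * x₁ * x₀⁻¹ * x₁ and b := x₀ * x₁. Then there exist group endomorphisms σ, τ : F₂ →* F₂ with σ a = b and τ b = a (namely σ with σ x₀ = x₀x₁, σ x₁ = 1 and τ with τ x₀ = x₀²x₁, τ x₁ = x₀⁻¹x₁), but there is no group automorphism Φ of F₂ with Φ a = b. -/

import Mathlib

/-!
An automorphism `Φ` of `F₂` with `Φ a = b` turns, by precomposition, the homomorphisms
`F₂ → G` killing `a` bijectively into those killing `b`, for every group `G`. A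
homomorphism `F₂ → G` is a pair `(u, v) ∈ G × G`; for `G = S₃` there are 12 pairs with
`u² v u⁻¹ v = 1` but only 6 with `u v = 1`.
-/

/-- The first free generator of `FreeGroup (Fin 2)`. -/
noncomputable def x₀ : FreeGroup (Fin 2) := FreeGroup.of 0
/-- The second free generator of `FreeGroup (Fin 2)`. -/
noncomputable def x₁ : FreeGroup (Fin 2) := FreeGroup.of 1

def MulEquiv.homsKillingEquiv {M M' N : Type*} [MulOneClass M] [MulOneClass M'] [Monoid N]
    (Φ : M ≃* M') {a : M} {b : M'} (h : Φ a = b) :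
    {f : M →* N // f a = 1} ≃ {f : M' →* N // f b = 1} :=
  Φ.monoidHomCongrLeftEquiv.subtypeEquiv fun f => by simp [← h]

namespace FreeGroup

variable {G : Type*} [Group G]

def homFinTwoEquiv : (FreeGroup (Fin 2) →* G) ≃ G × G :=
  lift.symm.trans (piFinTwoEquiv fun _ => G)

theorem card_homs_killing_eq {w : FreeGroup (Fin 2)} {P : G × G → Prop}
    (hP : ∀ f : FreeGroup (Fin 2) →* G, f w = 1 ↔ P (f x₀, f x₁)) :
    Nat.card {f : FreeGroup (Fin 2) →* G // f w = 1} = Nat.card {p : G × G // P p} :=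
  Nat.card_congr (homFinTwoEquiv.subtypeEquiv hP)

end FreeGroup

theorem Equiv.Perm.card_fin_three_mul_eq_one :
    Nat.card {p : Equiv.Perm (Fin 3) × Equiv.Perm (Fin 3) // p.1 * p.2 = 1} = 6 := by
  rw [Nat.card_eq_fintype_card]
  decide

set_option maxRecDepth 10000 in
theorem Equiv.Perm.card_fin_three_sq_mul_mul_inv_mul_eq_one :
    Nat.card {p : Equiv.Perm (Fin 3) × Equiv.Perm (Fin 3) //
      p.1 ^ 2 * p.2 * p.1⁻¹ * p.2 = 1} = 12 := by
  rw [Nat.card_eq_fintype_card]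
  decide

/-- The free group of rank 2 is not weakly homogeneous: with
`a = x₀² x₁ x₀⁻¹ x₁` and `b = x₀ x₁`, there are endomorphisms `σ`, `τ` of `F₂`
(given on generators by `σ x₀ = x₀x₁`, `σ x₁ = 1`, `τ x₀ = x₀²x₁`, `τ x₁ = x₀⁻¹x₁`)
with `σ a = b` and `τ b = a`, but no automorphism of `F₂` sends `a` to `b`. -/
theorem freeGroup_rank_two_not_weaklyHomogeneous :
    (∃ σ : FreeGroup (Fin 2) →* FreeGroup (Fin 2),
      σ x₀ = x₀ * x₁ ∧ σ x₁ = 1 ∧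
        σ (x₀ ^ 2 * x₁ * x₀⁻¹ * x₁) = x₀ * x₁) ∧
    (∃ τ : FreeGroup (Fin 2) →* FreeGroup (Fin 2),
      τ x₀ = x₀ ^ 2 * x₁ ∧ τ x₁ = x₀⁻¹ * x₁ ∧
        τ (x₀ * x₁) = x₀ ^ 2 * x₁ * x₀⁻¹ * x₁) ∧
    ¬ ∃ Φ : FreeGroup (Fin 2) ≃* FreeGroup (Fin 2),
        Φ (x₀ ^ 2 * x₁ * x₀⁻¹ * x₁) = x₀ * x₁ := by
  refine ⟨⟨FreeGroup.lift ![x₀ * x₁, 1], ?_⟩,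
    ⟨FreeGroup.lift ![x₀ ^ 2 * x₁, x₀⁻¹ * x₁], ?_⟩, ?_⟩
  · simp [x₀, x₁, pow_two, mul_assoc]
  · simp [x₀, x₁, pow_two, mul_assoc]
  · rintro ⟨Φ, hΦ⟩
    have : (12 : ℕ) = 6 := calc
      12 = Nat.card {p : Equiv.Perm (Fin 3) × Equiv.Perm (Fin 3) //
          p.1 ^ 2 * p.2 * p.1⁻¹ * p.2 = 1} :=
        Equiv.Perm.card_fin_three_sq_mul_mul_inv_mul_eq_one.symm
      _ = Nat.card {f : FreeGroup (Fin 2) →* Equiv.Perm (Fin 3) //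
          f (x₀ ^ 2 * x₁ * x₀⁻¹ * x₁) = 1} :=
        (FreeGroup.card_homs_killing_eq fun f => by simp).symm
      _ = Nat.card {f : FreeGroup (Fin 2) →* Equiv.Perm (Fin 3) // f (x₀ * x₁) = 1} :=
        Nat.card_congr (Φ.homsKillingEquiv hΦ)
      _ = Nat.card {p : Equiv.Perm (Fin 3) × Equiv.Perm (Fin 3) // p.1 * p.2 = 1} :=
        FreeGroup.card_homs_killing_eq fun f => by simp
      _ = 6 := Equiv.Perm.card_fin_three_mul_eq_one
    omega
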